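/- (Invariance of the total angle.) Let n ≥ 3 and let Δ be a triangulation of [n]. Call an unordered triple {i,j,k} of distinct elements of [n] a triangle of Δ if all pairs among i,j,k belong to Δ. For i ∈ [n], define the total angle T_i^Δ := Σ T_i^{jk}, the sum taken over all unordered pairs {j,k} with j < k such that {i,j,k} is a triangle of Δ. Then T_i^Δ = T_i^{i⁻,i⁺} in 𝒜_n for every i ∈ [n]; in particular T_i^Δ does not depend on the choice of the triangulation Δ. -/

import Mathlib

open scoped Classical

noncomputable section

namespace NCPolygon

/-- Cyclic successor on `Fin n` (the vertices of the `n`-gon in cyclic order). -/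
def csucc {n : ℕ} (i : Fin n) : Fin n :=
  ⟨(i.1 + 1) % n, Nat.mod_lt _ (Nat.lt_of_le_of_lt (Nat.zero_le _) i.isLt)⟩

/-- Cyclic predecessor on `Fin n`. -/
def cpred {n : ℕ} (i : Fin n) : Fin n :=
  ⟨(i.1 + (n - 1)) % n, Nat.mod_lt _ (Nat.lt_of_le_of_lt (Nat.zero_le _) i.isLt)⟩

/-- A list of elements of `Fin n` is *cyclic* if its entries are distinct and some
cyclic rotation of it is strictly increasing. -/
def IsCyclicSeq {n : ℕ} (l : List (Fin n)) : Prop :=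
  l.Nodup ∧ ∃ k : ℕ, (l.rotate k).Pairwise (· < ·)

/-- The pair `(i,k)` crosses `(j,l)` iff `(i,j,k,l)` is cyclic. -/
def Crosses {n : ℕ} (p q : Fin n × Fin n) : Prop :=
  IsCyclicSeq [p.1, q.1, p.2, q.2]

def NonCrossing {n : ℕ} (Δ : Set (Fin n × Fin n)) : Prop :=
  (∀ p ∈ Δ, p.1 ≠ p.2) ∧ ∀ p ∈ Δ, ∀ q ∈ Δ, ¬ Crosses p q

/-- A triangulation of the `n`-gon: a maximal crossing-free set of (directed) chords. -/
def IsTriangulation {n : ℕ} (Δ : Set (Fin n × Fin n)) : Prop :=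
  NonCrossing Δ ∧ ∀ Δ' : Set (Fin n × Fin n), NonCrossing Δ' → Δ ⊆ Δ' → Δ' = Δ

/-! ### The noncommutative polygon algebra `𝒜_n` -/

abbrev OffD (n : ℕ) := {p : Fin n × Fin n // p.1 ≠ p.2}

abbrev AGen (n : ℕ) := OffD n ⊕ OffD n

def xF {n : ℕ} (i j : Fin n) : FreeAlgebra ℚ (AGen n) :=
  if h : i ≠ j then FreeAlgebra.ι ℚ (Sum.inl ⟨(i, j), h⟩) else 1

def xiF {n : ℕ} (i j : Fin n) : FreeAlgebra ℚ (AGen n) :=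
  if h : i ≠ j then FreeAlgebra.ι ℚ (Sum.inr ⟨(i, j), h⟩) else 1

/-- The defining relations of `𝒜_n`: invertibility, triangle, and exchange relations. -/
inductive ARel (n : ℕ) : FreeAlgebra ℚ (AGen n) → FreeAlgebra ℚ (AGen n) → Prop
  | mul_inv {i j : Fin n} (h : i ≠ j) : ARel n (xF i j * xiF i j) 1
  | inv_mul {i j : Fin n} (h : i ≠ j) : ARel n (xiF i j * xF i j) 1
  | triangle {i j k : Fin n} (hij : i ≠ j) (hik : i ≠ k) (hjk : j ≠ k) :
      ARel n (xF i j * xiF k j * xF k i) (xF i k * xiF j k * xF j i)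
  | exchange {i j k l : Fin n} (h : IsCyclicSeq [i, j, k, l]) :
      ARel n (xF j l) (xF j k * xiF i k * xF i l + xF j i * xiF k i * xF k l)

/-- The noncommutative `n`-gon algebra `𝒜_n`. -/
abbrev NCPoly (n : ℕ) := RingQuot (ARel n)

/-- The generator `x_{ij} ∈ 𝒜_n` (junk value `1` when `i = j`). -/
def X {n : ℕ} (i j : Fin n) : NCPoly n :=
  RingQuot.mkAlgHom ℚ (ARel n) (xF i j)

/-- The generator `x_{ij}⁻¹ ∈ 𝒜_n`. -/
def Xinv {n : ℕ} (i j : Fin n) : NCPoly n :=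
  RingQuot.mkAlgHom ℚ (ARel n) (xiF i j)

/-- The noncommutative angle `T_i^{jk} = x_{ji}⁻¹ x_{jk} x_{ik}⁻¹ ∈ 𝒜_n`. -/
def Tang {n : ℕ} (i j k : Fin n) : NCPoly n := Xinv j i * X j k * Xinv i k

/-! ### Triangle groups -/

def tF {n : ℕ} (Δ : Set (Fin n × Fin n)) (i j : Fin n) : FreeGroup Δ :=
  if h : (i, j) ∈ Δ then FreeGroup.of (⟨(i, j), h⟩ : Δ) else 1

/-- The triangle relations of the triangle group `𝕋_Δ`. -/
def triRels {n : ℕ} (Δ : Set (Fin n × Fin n)) : Set (FreeGroup Δ) :=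
  { w | ∃ i j k : Fin n, i ≠ j ∧ i ≠ k ∧ j ≠ k ∧
      (i, j) ∈ Δ ∧ (j, i) ∈ Δ ∧ (i, k) ∈ Δ ∧ (k, i) ∈ Δ ∧ (j, k) ∈ Δ ∧ (k, j) ∈ Δ ∧
      w = tF Δ i j * (tF Δ k j)⁻¹ * tF Δ k i *
        (tF Δ i k * (tF Δ j k)⁻¹ * tF Δ j i)⁻¹ }

/-- The triangle group `𝕋_Δ` of a triangulation `Δ`. -/
abbrev TriGroup {n : ℕ} (Δ : Set (Fin n × Fin n)) := PresentedGroup (triRels Δ)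

/-- The generator `t_{ij} ∈ 𝕋_Δ` (junk value `1` when `(i,j) ∉ Δ`). -/
def tG {n : ℕ} (Δ : Set (Fin n × Fin n)) (i j : Fin n) : TriGroup Δ :=
  if h : (i, j) ∈ Δ then PresentedGroup.of (rels := triRels Δ) ⟨(i, j), h⟩ else 1

/-! ### The big triangle group `𝕋_n` -/

def btF {n : ℕ} (i j : Fin n) : FreeGroup (OffD n) :=
  if h : i ≠ j then FreeGroup.of (⟨(i, j), h⟩ : OffD n) else 1

def bigRels (n : ℕ) : Set (FreeGroup (OffD n)) :=
  { w | ∃ i j k : Fin n, i ≠ j ∧ i ≠ k ∧ j ≠ k ∧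
      w = btF i j * (btF k j)⁻¹ * btF k i * (btF i k * (btF j k)⁻¹ * btF j i)⁻¹ }

/-- The big triangle group `𝕋_n`. -/
abbrev BigTriGroup (n : ℕ) := PresentedGroup (bigRels n)

/-- The generator `t_{ij} ∈ 𝕋_n`. -/
def bigT {n : ℕ} (i j : Fin n) : BigTriGroup n :=
  if h : i ≠ j then PresentedGroup.of (rels := bigRels n) ⟨(i, j), h⟩ else 1

/-! ### Distinguished subalgebras and subgroups -/

/-- `𝒜_Δ`: the subalgebra of `𝒜_n` generated by all `x_{ij}` together with the
`x_{ij}⁻¹` for `(i,j) ∈ Δ`. -/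
def ADelta (n : ℕ) (Δ : Set (Fin n × Fin n)) : Subalgebra ℚ (NCPoly n) :=
  Algebra.adjoin ℚ
    ({a | ∃ i j : Fin n, i ≠ j ∧ a = X i j} ∪ {a | ∃ p ∈ Δ, a = Xinv p.1 p.2})

/-- `𝒬_n`: the subalgebra of `𝒜_n` generated by the `y_{ij}^k = x_{ki}⁻¹ x_{kj}`. -/
def Qn (n : ℕ) : Subalgebra ℚ (NCPoly n) :=
  Algebra.adjoin ℚ
    {a : NCPoly n | ∃ i j k : Fin n, i ≠ j ∧ i ≠ k ∧ j ≠ k ∧ a = Xinv k i * X k j}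

/-- `𝕌_Δ`: the subgroup of `𝕋_Δ` generated by the `u_{ij}^k = t_{ki}⁻¹ t_{kj}`. -/
def UDelta {n : ℕ} (Δ : Set (Fin n × Fin n)) : Subgroup (TriGroup Δ) :=
  Subgroup.closure
    {g | ∃ i j k : Fin n, (k, i) ∈ Δ ∧ (k, j) ∈ Δ ∧ g = (tG Δ k i)⁻¹ * tG Δ k j}

/-!
Measure every vertex by its arc from `i`. The neighbours of `i` in `Δ` then run from `i⁺`
(arc `1`) to `i⁻` (arc `n - 1`), since boundary edges cross nothing and so lie in every
triangulation, and `{i, j, k}` is a triangle of `Δ` exactly when `j, k` are consecutive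
neighbours. The exchange relation makes the angle additive,
`T_i^{jl} = T_i^{jk} + T_i^{kl}` for cyclic `(i, j, k, l)`, so the sum over consecutive
neighbours telescopes to `T_i^{i⁺ i⁻}`, which is `T_i^{i⁻ i⁺}` by the triangle relation.
-/

section ConsecutivePairs

variable {ι β : Type*} [LinearOrder β] {r : ι → β} {s : Finset ι}

def consecutivePairs (r : ι → β) (s : Finset ι) : Finset (ι × ι) :=
  (s ×ˢ s).filter fun q => r q.1 < r q.2 ∧ ∀ c ∈ s, ¬(r q.1 < r c ∧ r c < r q.2)

theorem mem_consecutivePairs {q : ι × ι} :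
    q ∈ consecutivePairs r s ↔
      q.1 ∈ s ∧ q.2 ∈ s ∧ r q.1 < r q.2 ∧ ∀ c ∈ s, ¬(r q.1 < r c ∧ r c < r q.2) := by
  simp [consecutivePairs, and_assoc]

theorem consecutivePairs_insert_of_lt [DecidableEq ι] {m b : ι} (hr : Set.InjOn r s)
    (hm : ∀ x ∈ s, r x < r m) (hb : b ∈ s) (hbmax : ∀ x ∈ s, r x ≤ r b) :
    consecutivePairs r (insert m s) = insert (b, m) (consecutivePairs r s) := by
  ext ⟨x, y⟩
  simp only [mem_consecutivePairs, Finset.mem_insert, Prod.mk.injEq, forall_eq_or_imp]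
  constructor
  · rintro ⟨hx, hy, hxy, -, hgap⟩
    have hxs : x ∈ s := hx.resolve_left fun h => by
      subst h; rcases hy with rfl | hy; exacts [lt_irrefl _ hxy, (hm y hy).not_gt hxy]
    rcases hy with rfl | hy
    · refine Or.inl ⟨hr hxs hb (le_antisymm (hbmax x hxs) ?_), rfl⟩
      exact not_lt.1 fun h => hgap b hb ⟨h, hm b hb⟩
    · exact Or.inr ⟨hxs, hy, hxy, hgap⟩
  · rintro (⟨rfl, rfl⟩ | ⟨hx, hy, hxy, hgap⟩)
    · exact ⟨Or.inr hb, Or.inl rfl, hm x hb, fun h => lt_irrefl _ h.2,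
        fun c hc h => (hbmax c hc).not_gt h.1⟩
    · exact ⟨Or.inr hx, Or.inr hy, hxy, fun h => (hm y hy).not_gt h.2, hgap⟩

theorem sum_consecutivePairs_eq {M : Type*} [DecidableEq ι] [AddCommMonoid M] (g : ι → ι → M)
    (hr : Set.InjOn r s)
    (hg : ∀ x ∈ s, ∀ y ∈ s, ∀ z ∈ s, r x < r y → r y < r z → g x z = g x y + g y z)
    {a b : ι} (ha : a ∈ s) (hb : b ∈ s) (hab : r a < r b) (hmin : ∀ x ∈ s, r a ≤ r x)
    (hmax : ∀ x ∈ s, r x ≤ r b) :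
    ∑ q ∈ consecutivePairs r s, g q.1 q.2 = g a b := by
  induction s using Finset.induction_on_max_value r generalizing b with
  | empty => simp at ha
  | insert m s hms hm ih =>
    have hsub : ∀ {x}, x ∈ s → x ∈ insert m s := Finset.mem_insert_of_mem
    have hr' : Set.InjOn r s := hr.mono (by simp)
    have hm' : ∀ x ∈ s, r x < r m := fun x hx => (hm x hx).lt_of_ne fun h =>
      hms (hr (hsub hx) (Finset.mem_insert_self m s) h ▸ hx)
    have hbm : b = m := (Finset.mem_insert.1 hb).resolve_right fun h =>
      (hm' b h).not_ge (hmax m (Finset.mem_insert_self m s))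
    rw [hbm] at hab ⊢
    have has : a ∈ s := (Finset.mem_insert.1 ha).resolve_left fun h => (h ▸ hab).false
    obtain ⟨c, hc, hcmax⟩ := s.exists_max_image r ⟨a, has⟩
    rw [consecutivePairs_insert_of_lt hr' hm' hc hcmax,
      Finset.sum_insert fun h => hms (mem_consecutivePairs.1 h).2.1]
    rcases (hmin c (hsub hc)).lt_or_eq with hac | hac
    · rw [ih hr' (fun x hx y hy z hz => hg x (hsub hx) y (hsub hy) z (hsub hz)) has hc hac
        (fun x hx => hmin x (hsub hx)) hcmax, add_comm,
        ← hg a (hsub has) c (hsub hc) m (Finset.mem_insert_self m s) hac (hm' c hc)]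
    · have hca : c = a := (hr' has hc hac).symm
      subst hca
      rw [Finset.sum_eq_zero fun q hq => ?_, add_zero]
      have hq := mem_consecutivePairs.1 hq
      exact absurd (hmin _ (hsub hq.1)) (hq.2.2.1.trans_le (hcmax _ hq.2.1)).not_ge

end ConsecutivePairs

theorem sum_filter_lt_eq_sum_filter_comp_lt {α β M : Type*} [Fintype α] [LinearOrder α]
    [LinearOrder β] [AddCommMonoid M] {r : α → β} (hr : Function.Injective r)
    (P : α → α → Prop) [DecidableRel P] (hP : ∀ a b, P a b → P b a) (f : α → α → M)
    (hf : ∀ a b, a ≠ b → P a b → f a b = f b a) :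
    ∑ p ∈ Finset.univ.filter (fun p : α × α => p.1 < p.2 ∧ P p.1 p.2), f p.1 p.2 =
      ∑ p ∈ Finset.univ.filter (fun p : α × α => r p.1 < r p.2 ∧ P p.1 p.2),
        f p.1 p.2 := by
  refine Finset.sum_nbij' (fun p => if r p.1 < r p.2 then p else p.swap)
    (fun p => if p.1 < p.2 then p else p.swap) ?_ ?_ ?_ ?_ ?_ <;>
    rintro ⟨x, y⟩ h <;>
    simp only [Finset.mem_filter, Finset.mem_univ, true_and] at h ⊢ <;>
    have := hr.eq_iff (a := x) (b := y) <;> grind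

def IsCyclicOrder (a b c d : ℕ) : Prop :=
  (a < b ∧ b < c ∧ c < d) ∨ (b < c ∧ c < d ∧ d < a) ∨ (c < d ∧ d < a ∧ a < b) ∨
    (d < a ∧ a < b ∧ b < c)

theorem isCyclicSeq_four_iff {n : ℕ} (a b c d : Fin n) :
    IsCyclicSeq [a, b, c, d] ↔ IsCyclicOrder a b c d := by
  unfold IsCyclicSeq IsCyclicOrder
  constructor
  · rintro ⟨-, k, hk⟩
    rw [← List.rotate_mod] at hk
    have : k % 4 < 4 := Nat.mod_lt _ (by norm_num)
    interval_cases k % 4 <;> simp [List.rotate_cons_succ] at hk <;> omega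
  · intro h
    refine ⟨by simp [Fin.ext_iff]; omega, ?_⟩
    rcases h with h | h | h | h
    · exact ⟨0, by simp; omega⟩
    · exact ⟨1, by simp [List.rotate_cons_succ]; omega⟩
    · exact ⟨2, by simp [List.rotate_cons_succ]; omega⟩
    · exact ⟨3, by simp [List.rotate_cons_succ]; omega⟩

/-- The position of `x` when the polygon is relabelled so that `i` becomes `0`. -/
def arc {n : ℕ} (i x : Fin n) : ℕ := (x - i).val

section Arc

variable {n : ℕ}

theorem arc_lt (i x : Fin n) : arc i x < n := (x - i).isLt

theorem arc_add_val (i x : Fin n) : arc i x + i.val = x.val ∨ arc i x + i.val = x.val + n := by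
  unfold arc
  rcases le_or_gt i x with h | h
  · rw [Fin.coe_sub_iff_le.2 h]; omega
  · rw [Fin.coe_sub_iff_lt.2 h]; omega

theorem arc_injective (i : Fin n) : Function.Injective (arc i) := fun x y h => by
  have := arc_add_val i x; have := arc_add_val i y; have := x.isLt; have := y.isLt
  ext; omega

@[simp] theorem arc_self (i : Fin n) : arc i i = 0 := by
  simp [arc, Fin.val_sub, Nat.sub_add_cancel i.isLt.le]

theorem arc_eq_zero_iff {i x : Fin n} : arc i x = 0 ↔ x = i := by
  rw [← arc_self i, (arc_injective i).eq_iff]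

theorem arc_csucc (hn : 2 ≤ n) (i : Fin n) : arc i (csucc i) = 1 := by
  have hc : (csucc i).val = (i.val + 1) % n := rfl
  have := arc_add_val i (csucc i); have := arc_lt i (csucc i); have := i.isLt
  rcases Nat.lt_or_ge (i.val + 1) n with h | h
  · rw [Nat.mod_eq_of_lt h] at hc; omega
  · rw [show i.val + 1 = n by omega, Nat.mod_self] at hc; omega

theorem arc_cpred (i : Fin n) : arc i (cpred i) = n - 1 := by
  have hc : (cpred i).val = (i.val + (n - 1)) % n := rfl
  have := arc_add_val i (cpred i); have := arc_lt i (cpred i); have := i.isLt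
  rcases Nat.lt_or_ge (i.val + (n - 1)) n with h | h
  · rw [Nat.mod_eq_of_lt h] at hc; omega
  · rw [Nat.mod_eq_sub_mod h, Nat.mod_eq_of_lt (by omega)] at hc; omega

theorem isCyclicSeq_four_iff_arc (i a b c d : Fin n) :
    IsCyclicSeq [a, b, c, d] ↔ IsCyclicOrder (arc i a) (arc i b) (arc i c) (arc i d) := by
  rw [isCyclicSeq_four_iff]
  have := a.isLt; have := b.isLt; have := c.isLt; have := d.isLt
  have := arc_lt i a; have := arc_lt i b; have := arc_lt i c; have := arc_lt i d
  unfold IsCyclicOrder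
  rcases arc_add_val i a with _ | _ <;> rcases arc_add_val i b with _ | _ <;>
    rcases arc_add_val i c with _ | _ <;> rcases arc_add_val i d with _ | _ <;> omega

theorem crosses_iff_arc (i : Fin n) (p q : Fin n × Fin n) :
    Crosses p q ↔ IsCyclicOrder (arc i p.1) (arc i q.1) (arc i p.2) (arc i q.2) :=
  isCyclicSeq_four_iff_arc i _ _ _ _

theorem crosses_swap_left (p q : Fin n × Fin n) : Crosses p.swap q ↔ Crosses q p := by
  simp only [Crosses, isCyclicSeq_four_iff, IsCyclicOrder, Prod.fst_swap, Prod.snd_swap]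
  omega

end Arc

section Algebra

variable {n : ℕ} {i j k l : Fin n}

theorem X_mul_Xinv (h : i ≠ j) : X i j * Xinv i j = 1 := by
  rw [X, Xinv, ← map_mul, ← map_one (RingQuot.mkAlgHom ℚ (ARel n))]
  exact RingQuot.mkAlgHom_rel ℚ (ARel.mul_inv h)

theorem Xinv_mul_X (h : i ≠ j) : Xinv i j * X i j = 1 := by
  rw [X, Xinv, ← map_mul, ← map_one (RingQuot.mkAlgHom ℚ (ARel n))]
  exact RingQuot.mkAlgHom_rel ℚ (ARel.inv_mul h)

theorem X_triangle (hij : i ≠ j) (hik : i ≠ k) (hjk : j ≠ k) :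
    X i j * Xinv k j * X k i = X i k * Xinv j k * X j i := by
  simp only [X, Xinv, ← map_mul]
  exact RingQuot.mkAlgHom_rel ℚ (ARel.triangle hij hik hjk)

theorem X_exchange (h : IsCyclicSeq [i, j, k, l]) :
    X j l = X j k * Xinv i k * X i l + X j i * Xinv k i * X k l := by
  simp only [X, Xinv, ← map_mul, ← map_add]
  exact RingQuot.mkAlgHom_rel ℚ (ARel.exchange h)

theorem tang_comm (hij : i ≠ j) (hik : i ≠ k) (hjk : j ≠ k) : Tang i j k = Tang i k j :=
  calc Tang i j k = Xinv j i * X j k * Xinv i k * (X i j * Xinv i j) := by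
        rw [X_mul_Xinv hij, mul_one, Tang]
    _ = Xinv j i * (X j k * Xinv i k * X i j) * Xinv i j := by noncomm_ring
    _ = Xinv j i * (X j i * Xinv k i * X k j) * Xinv i j := by
        rw [X_triangle hij.symm hjk hik]
    _ = (Xinv j i * X j i) * (Xinv k i * X k j * Xinv i j) := by noncomm_ring
    _ = Tang i k j := by rw [Xinv_mul_X hij.symm, one_mul, Tang]

theorem tang_add (h : IsCyclicSeq [i, j, k, l]) : Tang i j l = Tang i j k + Tang i k l := by
  obtain ⟨hij, -, hil⟩ : i ≠ j ∧ i ≠ k ∧ i ≠ l := by simpa using (List.nodup_cons.1 h.1).1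
  calc Tang i j l
        = Xinv j i * (X j k * Xinv i k * X i l + X j i * Xinv k i * X k l) * Xinv i l := by
        rw [Tang, ← X_exchange h]
    _ = Xinv j i * X j k * Xinv i k * (X i l * Xinv i l)
        + (Xinv j i * X j i) * (Xinv k i * X k l * Xinv i l) := by noncomm_ring
    _ = Tang i j k + Tang i k l := by
        rw [X_mul_Xinv hil, Xinv_mul_X hij.symm, mul_one, one_mul, Tang, Tang]

end Algebra

theorem tang_add_of_arc_lt {n : ℕ} {i j k l : Fin n} (hj : 0 < arc i j) (hjk : arc i j < arc i k)
    (hkl : arc i k < arc i l) : Tang i j l = Tang i j k + Tang i k l :=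
  tang_add <| (isCyclicSeq_four_iff_arc i _ _ _ _).2 <| by
    simp only [arc_self, IsCyclicOrder]
    omega

/-- The condition on `(j, k)` in the sum of `total_angle_invariant`, verbatim, so that the two
filters agree definitionally. -/
abbrev IsTriangleAt {n : ℕ} (Δ : Set (Fin n × Fin n)) (i j k : Fin n) : Prop :=
  i ≠ j ∧ i ≠ k ∧ (i, j) ∈ Δ ∧ (j, i) ∈ Δ ∧ (i, k) ∈ Δ ∧ (k, i) ∈ Δ ∧ (j, k) ∈ Δ ∧ (k, j) ∈ Δ

theorem IsTriangleAt.symm {n : ℕ} {Δ : Set (Fin n × Fin n)} {i j k : Fin n}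
    (h : IsTriangleAt Δ i j k) : IsTriangleAt Δ i k j :=
  let ⟨hij, hik, h₁, h₂, h₃, h₄, h₅, h₆⟩ := h
  ⟨hik, hij, h₃, h₄, h₁, h₂, h₆, h₅⟩

namespace IsTriangulation

variable {n : ℕ} {Δ : Set (Fin n × Fin n)} {i j k : Fin n}

theorem mem_of_forall_not_crosses (hΔ : IsTriangulation Δ) {p : Fin n × Fin n}
    (hp : p.1 ≠ p.2) (h : ∀ q ∈ Δ, ¬Crosses p q ∧ ¬Crosses q p) : p ∈ Δ := by
  have hpp : ¬Crosses p p := fun hc => by simpa using hc.1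
  have hnc : NonCrossing (insert p Δ) := by
    refine ⟨?_, ?_⟩
    · rintro q (rfl | hq)
      exacts [hp, hΔ.1.1 q hq]
    · rintro q (rfl | hq) r (rfl | hr)
      exacts [hpp, (h r hr).1, (h q hq).2, hΔ.1.2 q hq r hr]
  rw [← hΔ.2 _ hnc (Set.subset_insert p Δ)]
  exact Set.mem_insert p Δ

theorem swap_mem (hΔ : IsTriangulation Δ) (h : (i, j) ∈ Δ) : (j, i) ∈ Δ :=
  hΔ.mem_of_forall_not_crosses (hΔ.1.1 _ h).symm fun q hq =>
    ⟨(crosses_swap_left (i, j) q).not.2 (hΔ.1.2 q hq _ h),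
      (crosses_swap_left (j, i) q).not.1 (hΔ.1.2 _ h q hq)⟩

theorem boundary_mem (hΔ : IsTriangulation Δ) (hn : 2 ≤ n)
    (hj : arc i j = 1 ∨ arc i j = n - 1) : (i, j) ∈ Δ := by
  refine hΔ.mem_of_forall_not_crosses (fun h => ?_) fun q _ => ?_
  · rw [show j = i from h.symm, arc_self] at hj
    omega
  · have := arc_lt i q.1; have := arc_lt i q.2
    simp only [crosses_iff_arc i, arc_self, IsCyclicOrder]
    omega

theorem arc_not_between (hΔ : IsTriangulation Δ) {x : Fin n} (hij : (i, j) ∈ Δ)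
    (hjk : (j, k) ∈ Δ) (hix : (i, x) ∈ Δ) : ¬(arc i j < arc i x ∧ arc i x < arc i k) := by
  rintro ⟨hjx, hxk⟩
  have hj : arc i j ≠ 0 := arc_eq_zero_iff.not.2 (hΔ.1.1 _ hij).symm
  apply hΔ.1.2 _ hjk _ (hΔ.swap_mem hix)
  simp only [crosses_iff_arc i, arc_self, IsCyclicOrder]
  omega

/-- Otherwise `ef` crosses `ij` or `ik`, or `f = i` and `e` is a neighbour of `i` in the gap. -/
theorem arc_mem_Icc_of_between (hΔ : IsTriangulation Δ) (hij : (i, j) ∈ Δ) (hik : (i, k) ∈ Δ)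
    (hgap : ∀ x, (i, x) ∈ Δ → ¬(arc i j < arc i x ∧ arc i x < arc i k)) {e f : Fin n}
    (hef : (e, f) ∈ Δ) (hje : arc i j < arc i e) (hek : arc i e < arc i k) :
    arc i j ≤ arc i f ∧ arc i f ≤ arc i k := by
  by_contra hf
  rcases Nat.eq_zero_or_pos (arc i f) with hf0 | hf0
  · rw [arc_eq_zero_iff] at hf0
    subst hf0
    exact hgap e (hΔ.swap_mem hef) ⟨hje, hek⟩
  by_cases hfj : arc i f < arc i j
  · apply hΔ.1.2 _ hij _ (hΔ.swap_mem hef)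
    simp only [crosses_iff_arc i, arc_self, IsCyclicOrder]
    omega
  · apply hΔ.1.2 _ hik _ hef
    simp only [crosses_iff_arc i, arc_self, IsCyclicOrder]
    omega

theorem mem_of_no_neighbor_between (hΔ : IsTriangulation Δ) (hij : (i, j) ∈ Δ)
    (hik : (i, k) ∈ Δ) (hjk : arc i j < arc i k)
    (hgap : ∀ x, (i, x) ∈ Δ → ¬(arc i j < arc i x ∧ arc i x < arc i k)) : (j, k) ∈ Δ := by
  refine hΔ.mem_of_forall_not_crosses (fun h => hjk.ne (congrArg (arc i) h)) fun q hq => ?_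
  have h₁ := hΔ.arc_mem_Icc_of_between hij hik hgap hq
  have h₂ := hΔ.arc_mem_Icc_of_between hij hik hgap (hΔ.swap_mem hq)
  simp only [crosses_iff_arc i, IsCyclicOrder]
  omega

theorem isTriangleAt_iff (hΔ : IsTriangulation Δ) (hjk : arc i j < arc i k) :
    IsTriangleAt Δ i j k ↔
      (i, j) ∈ Δ ∧ (i, k) ∈ Δ ∧ ∀ x, (i, x) ∈ Δ → ¬(arc i j < arc i x ∧ arc i x < arc i k) := by
  constructor
  · rintro ⟨-, -, hij, -, hik, -, hjk', -⟩
    exact ⟨hij, hik, fun x hx => hΔ.arc_not_between hij hjk' hx⟩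
  · rintro ⟨hij, hik, hgap⟩
    have hjk' := hΔ.mem_of_no_neighbor_between hij hik hjk hgap
    exact ⟨hΔ.1.1 _ hij, hΔ.1.1 _ hik, hij, hΔ.swap_mem hij, hik, hΔ.swap_mem hik, hjk',
      hΔ.swap_mem hjk'⟩

theorem filter_isTriangleAt_eq (hΔ : IsTriangulation Δ) (i : Fin n) :
    Finset.univ.filter (fun p : Fin n × Fin n => arc i p.1 < arc i p.2 ∧ IsTriangleAt Δ i p.1 p.2)
      = consecutivePairs (arc i) (Finset.univ.filter fun x => (i, x) ∈ Δ) := by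
  ext ⟨j, k⟩
  simp only [Finset.mem_filter, Finset.mem_univ, true_and, mem_consecutivePairs]
  constructor
  · rintro ⟨hjk, ht⟩
    obtain ⟨hij, hik, hgap⟩ := (hΔ.isTriangleAt_iff hjk).1 ht
    exact ⟨hij, hik, hjk, hgap⟩
  · rintro ⟨hij, hik, hjk, hgap⟩
    exact ⟨hjk, (hΔ.isTriangleAt_iff hjk).2 ⟨hij, hik, hgap⟩⟩

end IsTriangulation

/-- **Invariance of the total angle.** For every triangulation `Δ` of `[n]`
and every vertex `i`, the sum of the noncommutative angles at `i` over all triangles of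
`Δ` containing `i` equals `T_i^{i⁻, i⁺}`; in particular it does not depend on `Δ`. -/
theorem total_angle_invariant (n : ℕ) (hn : 3 ≤ n) (Δ : Set (Fin n × Fin n))
    (hΔ : IsTriangulation Δ) (i : Fin n) :
    ∑ p ∈ Finset.univ.filter (fun p : Fin n × Fin n =>
        p.1 < p.2 ∧ i ≠ p.1 ∧ i ≠ p.2 ∧
        (i, p.1) ∈ Δ ∧ (p.1, i) ∈ Δ ∧ (i, p.2) ∈ Δ ∧ (p.2, i) ∈ Δ ∧
        (p.1, p.2) ∈ Δ ∧ (p.2, p.1) ∈ Δ),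
      Tang i p.1 p.2 = Tang i (cpred i) (csucc i) := by
  have harc_succ : arc i (csucc i) = 1 := arc_csucc (by omega) i
  have hsucc : (i, csucc i) ∈ Δ := hΔ.boundary_mem (by omega) (Or.inl harc_succ)
  have hpred : (i, cpred i) ∈ Δ := hΔ.boundary_mem (by omega) (Or.inr (arc_cpred i))
  have harc_pos : ∀ x, (i, x) ∈ Δ → 0 < arc i x := fun x hx =>
    Nat.pos_of_ne_zero (arc_eq_zero_iff.not.2 (hΔ.1.1 _ hx).symm)
  calc _ = ∑ p ∈ Finset.univ.filter (fun p : Fin n × Fin n =>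
          arc i p.1 < arc i p.2 ∧ IsTriangleAt Δ i p.1 p.2), Tang i p.1 p.2 :=
        sum_filter_lt_eq_sum_filter_comp_lt (arc_injective i) (IsTriangleAt Δ i)
          (fun _ _ => IsTriangleAt.symm) (Tang i) fun _ _ hjk h => tang_comm h.1 h.2.1 hjk
    _ = ∑ p ∈ consecutivePairs (arc i) (Finset.univ.filter fun x => (i, x) ∈ Δ),
          Tang i p.1 p.2 := by
        rw [hΔ.filter_isTriangleAt_eq]
    _ = Tang i (csucc i) (cpred i) := by
        exact sum_consecutivePairs_eq (Tang i) (arc_injective i).injOn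
          (fun x hx _ _ _ _ hxy hyz => tang_add_of_arc_lt (harc_pos x (by simpa using hx)) hxy hyz)
          (by simpa) (by simpa) (by rw [harc_succ, arc_cpred]; omega)
          (fun x hx => harc_succ ▸ harc_pos x (by simpa using hx))
          (fun x _ => arc_cpred i ▸ Nat.le_sub_one_of_lt (arc_lt i x))
    _ = Tang i (cpred i) (csucc i) :=
        tang_comm (hΔ.1.1 _ hsucc) (hΔ.1.1 _ hpred) fun h => by
          have := congrArg (arc i) h
          rw [harc_succ, arc_cpred] at this
          omega

end NCPolygon
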